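/- arXiv:2503.03435 — 2 statements merged into one kernel-verified Lean document; each statement's English description precedes it below -/
import Mathlib

section
/- Let X be a uniquely geodesic metric space, let a, b ≥ 0, and let γ : [0, a] → X and δ : [0, b] → X be geodesic segments (isometric maps). Then the parameter set T = { t ∈ [0, a] : γ(t) ∈ δ([0, b]) } is order-connected: if t₁, t₂ ∈ T and t₁ ≤ t ≤ t₂, then t ∈ T. That is, two shortest paths intersect in at most one connected subpath. -/
/-- A geodesic segment of length `L` in a metric space `X`: an isometric map from
the real interval `[0, L]` (with its subspace metric) into `X`. -/
def IsGeodesicSegment {X : Type*} [MetricSpace X] (L : ℝ) (γ : ℝ → X) : Prop :=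
  ∀ s ∈ Set.Icc (0 : ℝ) L, ∀ t ∈ Set.Icc (0 : ℝ) L, dist (γ s) (γ t) = |s - t|

/-- A metric space is uniquely geodesic if for every pair of points `x, y`, any two
geodesic segments of length `dist x y` from `x` to `y` coincide on `[0, dist x y]`. -/
def UniquelyGeodesic (X : Type*) [MetricSpace X] : Prop :=
  ∀ x y : X, ∀ f g : ℝ → X,
    IsGeodesicSegment (dist x y) f → f 0 = x → f (dist x y) = y →
    IsGeodesicSegment (dist x y) g → g 0 = x → g (dist x y) = y →
    ∀ t ∈ Set.Icc (0 : ℝ) (dist x y), f t = g t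

/-- In a uniquely geodesic metric space, the parameter set
`T = {t ∈ [0,a] | γ t ∈ δ '' [0,b]}` of the intersection of two geodesic segments
is order-connected: two shortest paths intersect in at most one connected subpath. -/
theorem geodesic_intersection_ordConnected {X : Type*} [MetricSpace X]
    (hX : UniquelyGeodesic X) {a b : ℝ} (ha : 0 ≤ a) (hb : 0 ≤ b)
    {γ δ : ℝ → X} (hγ : IsGeodesicSegment a γ) (hδ : IsGeodesicSegment b δ) :
    ∀ t₁ ∈ {t ∈ Set.Icc (0 : ℝ) a | γ t ∈ δ '' Set.Icc (0 : ℝ) b},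
    ∀ t₂ ∈ {t ∈ Set.Icc (0 : ℝ) a | γ t ∈ δ '' Set.Icc (0 : ℝ) b},
    ∀ t, t₁ ≤ t → t ≤ t₂ →
      t ∈ {t ∈ Set.Icc (0 : ℝ) a | γ t ∈ δ '' Set.Icc (0 : ℝ) b} := by
  rintro t₁ ⟨⟨ht₁0, ht₁a⟩, s₁, ⟨hs₁0, hs₁b⟩, hγδ₁⟩
  rintro t₂ ⟨⟨ht₂0, ht₂a⟩, s₂, ⟨hs₂0, hs₂b⟩, hγδ₂⟩
  intro t htl htr
  have hta : t ∈ Set.Icc (0 : ℝ) a := ⟨le_trans ht₁0 htl, le_trans htr ht₂a⟩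
  refine ⟨hta, ?_⟩
  have hd : dist (γ t₁) (γ t₂) = t₂ - t₁ := by
    rw [hγ t₁ ⟨ht₁0, ht₁a⟩ t₂ ⟨ht₂0, ht₂a⟩, abs_of_nonpos (by linarith)]; ring
  have hds : dist (γ t₁) (γ t₂) = |s₁ - s₂| := by
    rw [← hγδ₁, ← hγδ₂]; exact hδ s₁ ⟨hs₁0, hs₁b⟩ s₂ ⟨hs₂0, hs₂b⟩
  have hf : IsGeodesicSegment (dist (γ t₁) (γ t₂)) (fun u => γ (t₁ + u)) := by
    intro s hs u hu
    rw [hd] at hs hu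
    have h1 : t₁ + s ∈ Set.Icc (0 : ℝ) a := ⟨by linarith [hs.1], by linarith [hs.2]⟩
    have h2 : t₁ + u ∈ Set.Icc (0 : ℝ) a := ⟨by linarith [hu.1], by linarith [hu.2]⟩
    rw [hγ _ h1 _ h2]; ring_nf
  have hf0 : (fun u => γ (t₁ + u)) 0 = γ t₁ := by simp
  have hfd : (fun u => γ (t₁ + u)) (dist (γ t₁) (γ t₂)) = γ t₂ := by
    simp [hd]
  have htmem : t - t₁ ∈ Set.Icc (0 : ℝ) (dist (γ t₁) (γ t₂)) :=
    ⟨by linarith, by rw [hd]; linarith⟩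
  rcases le_or_gt s₁ s₂ with hcase | hcase
  · -- d = s₂ - s₁, use g u = δ (s₁ + u)
    have hd2 : dist (γ t₁) (γ t₂) = s₂ - s₁ := by
      rw [hds, abs_of_nonpos (by linarith)]; ring
    have hg : IsGeodesicSegment (dist (γ t₁) (γ t₂)) (fun u => δ (s₁ + u)) := by
      intro s hs u hu
      rw [hd2] at hs hu
      have h1 : s₁ + s ∈ Set.Icc (0 : ℝ) b := ⟨by linarith [hs.1], by linarith [hs.2]⟩
      have h2 : s₁ + u ∈ Set.Icc (0 : ℝ) b := ⟨by linarith [hu.1], by linarith [hu.2]⟩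
      rw [hδ _ h1 _ h2]; ring_nf
    have key := hX (γ t₁) (γ t₂) _ _ hf hf0 hfd hg
      (by simpa using hγδ₁) (by simpa [hd2] using hγδ₂)
      (t - t₁) htmem
    simp only [add_sub_cancel] at key
    refine ⟨s₁ + (t - t₁), ?_, key.symm⟩
    have := htmem.2
    rw [hd2] at this
    exact ⟨by linarith [htmem.1], by linarith⟩
  · -- d = s₁ - s₂, use g u = δ (s₁ - u)
    have hd2 : dist (γ t₁) (γ t₂) = s₁ - s₂ := by
      rw [hds, abs_of_nonneg (by linarith)]
    have hg : IsGeodesicSegment (dist (γ t₁) (γ t₂)) (fun u => δ (s₁ - u)) := by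
      intro s hs u hu
      rw [hd2] at hs hu
      have h1 : s₁ - s ∈ Set.Icc (0 : ℝ) b := ⟨by linarith [hs.2], by linarith [hs.1]⟩
      have h2 : s₁ - u ∈ Set.Icc (0 : ℝ) b := ⟨by linarith [hu.2], by linarith [hu.1]⟩
      rw [hδ _ h1 _ h2]
      rw [show s₁ - s - (s₁ - u) = -(s - u) by ring, abs_neg]
    have key := hX (γ t₁) (γ t₂) _ _ hf hf0 hfd hg
      (by simpa using hγδ₁) (by simpa [hd2] using hγδ₂)
      (t - t₁) htmem
    simp only [add_sub_cancel] at key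
    refine ⟨s₁ - (t - t₁), ?_, key.symm⟩
    have := htmem.2
    rw [hd2] at this
    exact ⟨by linarith, by linarith [htmem.1]⟩
end

section
/- Let X be a uniquely geodesic metric space, let a, b ≥ 0, and let γ : [0, a] → X and δ : [0, b] → X be geodesic segments (isometric maps). Then the intersection of their images, γ([0, a]) ∩ δ([0, b]), is either empty or equal to γ([t₁, t₂]) for some t₁ ≤ t₂ in [0, a]. In particular, a nonempty intersection of two shortest paths has a well-defined first point γ(t₁) and last point γ(t₂) along γ, and the intersection is exactly the subpath of γ between them. -/
theorem geodesic_continuousOn {X : Type*} [MetricSpace X] {L : ℝ} {γ : ℝ → X}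
    (hγ : IsGeodesicSegment L γ) : ContinuousOn γ (Set.Icc (0 : ℝ) L) := by
  refine (LipschitzOnWith.of_dist_le_mul (K := 1) ?_).continuousOn
  intro x hx y hy
  rw [hγ x hx y hy, NNReal.coe_one, one_mul, Real.dist_eq]

/-- In a uniquely geodesic metric space, the intersection of two
geodesic segments is empty or equal to the subpath `γ '' [t₁, t₂]` of `γ`, so a
nonempty intersection has a first point `γ t₁` and a last point `γ t₂` along `γ`. -/
theorem geodesic_intersection_is_subpath {X : Type*} [MetricSpace X]
    (hX : UniquelyGeodesic X) {a b : ℝ} (ha : 0 ≤ a) (hb : 0 ≤ b)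
    {γ δ : ℝ → X} (hγ : IsGeodesicSegment a γ) (hδ : IsGeodesicSegment b δ) :
    (γ '' Set.Icc (0 : ℝ) a) ∩ (δ '' Set.Icc (0 : ℝ) b) = ∅ ∨
      ∃ t₁ t₂ : ℝ, 0 ≤ t₁ ∧ t₁ ≤ t₂ ∧ t₂ ≤ a ∧
        (γ '' Set.Icc (0 : ℝ) a) ∩ (δ '' Set.Icc (0 : ℝ) b) = γ '' Set.Icc t₁ t₂ := by
  set K := δ '' Set.Icc (0 : ℝ) b with hKdef
  have hKclosed : IsClosed K :=
    (isCompact_Icc.image_of_continuousOn (geodesic_continuousOn hδ)).isClosed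
  set S := Set.Icc (0 : ℝ) a ∩ γ ⁻¹' K with hSdef
  have hSclosed : IsClosed S :=
    (geodesic_continuousOn hγ).preimage_isClosed_of_isClosed isClosed_Icc hKclosed
  have himg : (γ '' Set.Icc (0 : ℝ) a) ∩ K = γ '' S := by
    ext x; constructor
    · rintro ⟨⟨t, ht, rfl⟩, hx⟩; exact ⟨t, ⟨ht, hx⟩, rfl⟩
    · rintro ⟨t, ⟨ht, htK⟩, rfl⟩; exact ⟨⟨t, ht, rfl⟩, htK⟩
  rcases S.eq_empty_or_nonempty with hSe | hSne
  · left; rw [himg, hSe, Set.image_empty]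
  · right
    have hconv : ∀ s ∈ S, ∀ u ∈ S, Set.Icc s u ⊆ S := by
      rintro s ⟨hs, hsK⟩ u ⟨hu, huK⟩ m ⟨hsm, hmu⟩
      obtain ⟨p, hp, hpγ⟩ := hsK
      obtain ⟨q, hq, hqγ⟩ := huK
      have hsu : s ≤ u := le_trans hsm hmu
      have hm : m ∈ Set.Icc (0 : ℝ) a := ⟨le_trans hs.1 hsm, le_trans hmu hu.2⟩
      have hd : dist (γ s) (γ u) = u - s := by
        rw [hγ s hs u hu, abs_sub_comm, abs_of_nonneg (by linarith)]
      have hd2 : |p - q| = u - s := by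
        rw [← hδ p hp q hq, hpγ, hqγ, hd]
      refine ⟨hm, ?_⟩
      have hf : IsGeodesicSegment (dist (γ s) (γ u)) (fun t => γ (s + t)) := by
        rw [hd]
        intro x hx y hy
        have := hγ (s + x) ⟨by linarith [hx.1, hs.1], by linarith [hx.2, hu.2]⟩
          (s + y) ⟨by linarith [hy.1, hs.1], by linarith [hy.2, hu.2]⟩
        simpa using this
      have hf0 : (fun t => γ (s + t)) 0 = γ s := by simp
      have hfL : (fun t => γ (s + t)) (dist (γ s) (γ u)) = γ u := by
        rw [hd]; simp
      have hmem : m - s ∈ Set.Icc (0 : ℝ) (dist (γ s) (γ u)) := by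
        rw [hd]; exact ⟨by linarith, by linarith⟩
      rcases le_total p q with hpq | hpq
      · have hqp : q - p = u - s := by
          rw [← hd2, abs_sub_comm, abs_of_nonneg (by linarith)]
        have hg : IsGeodesicSegment (dist (γ s) (γ u)) (fun t => δ (p + t)) := by
          rw [hd]
          intro x hx y hy
          have := hδ (p + x) ⟨by linarith [hx.1, hp.1], by linarith [hx.2, hq.2]⟩
            (p + y) ⟨by linarith [hy.1, hp.1], by linarith [hy.2, hq.2]⟩
          simpa using this
        have hg0 : (fun t => δ (p + t)) 0 = γ s := by simpa using hpγ
        have hgL : (fun t => δ (p + t)) (dist (γ s) (γ u)) = γ u := by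
          rw [hd]
          have : p + (u - s) = q := by linarith
          simpa [this] using hqγ
        have heq := hX (γ s) (γ u) _ _ hf hf0 hfL hg hg0 hgL (m - s) hmem
        have hγm : γ m = δ (p + (m - s)) := by
          have : s + (m - s) = m := by ring
          simpa [this] using heq
        exact ⟨p + (m - s), ⟨by linarith [hp.1], by linarith [hq.2]⟩, hγm.symm⟩
      · have hqp : p - q = u - s := by
          rw [← hd2, abs_of_nonneg (by linarith)]
        have hg : IsGeodesicSegment (dist (γ s) (γ u)) (fun t => δ (p - t)) := by
          rw [hd]
          intro x hx y hy
          have := hδ (p - x) ⟨by linarith [hx.2, hq.1], by linarith [hx.1, hp.2]⟩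
            (p - y) ⟨by linarith [hy.2, hq.1], by linarith [hy.1, hp.2]⟩
          rw [this]
          rw [show p - x - (p - y) = y - x by ring, abs_sub_comm]
        have hg0 : (fun t => δ (p - t)) 0 = γ s := by simpa using hpγ
        have hgL : (fun t => δ (p - t)) (dist (γ s) (γ u)) = γ u := by
          rw [hd]
          have : p - (u - s) = q := by linarith
          simpa [this] using hqγ
        have heq := hX (γ s) (γ u) _ _ hf hf0 hfL hg hg0 hgL (m - s) hmem
        have hγm : γ m = δ (p - (m - s)) := by
          have : s + (m - s) = m := by ring
          simpa [this] using heq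
        exact ⟨p - (m - s), ⟨by linarith [hq.1], by linarith [hp.2]⟩, hγm.symm⟩
    have hbdd : BddBelow S := ⟨0, fun t ht => ht.1.1⟩
    have hbdd' : BddAbove S := ⟨a, fun t ht => ht.1.2⟩
    have ht₁S : sInf S ∈ S := hSclosed.csInf_mem hSne hbdd
    have ht₂S : sSup S ∈ S := hSclosed.csSup_mem hSne hbdd'
    refine ⟨sInf S, sSup S, ht₁S.1.1, le_csSup hbdd' ht₁S, ht₂S.1.2, ?_⟩
    have hSeq : S = Set.Icc (sInf S) (sSup S) := by
      apply Set.Subset.antisymm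
      · intro t ht
        exact ⟨csInf_le hbdd ht, le_csSup hbdd' ht⟩
      · exact hconv _ ht₁S _ ht₂S
    rw [himg]; exact congrArg (Set.image γ) hSeq
end
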